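/- Let M ∈ GLₙ(ℤ). Then for all positive integers o and ν there exist primes p₁ ≠ p₂ with pᵢ ≡ 1 mod o and pᵢ ≥ ν for i = 1, 2, such that, setting s := p₁p₂ and r := s·|GLₙ(ℤ/s)|, every cyclic subgroup C of (ℤ/s)ⁿ ⋊_{M_s} ℤ/r satisfies at least one of: (a) C ∩ (ℤ/s)ⁿ = {0}; (b) there is i ∈ {1, 2} such that pᵢ divides both the order of C and the index [ℤ/r : pr_{r,s}(C)]. In other words, every M ∈ GLₙ(ℤ) is cyclic-good. -/

import Mathlib

open Multiplicative

/-- The homomorphism `ℤ/r → G` sending the generator `1` of `ℤ/r` to a given element `g`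
satisfying `g ^ r = 1` (and the trivial homomorphism if `g ^ r ≠ 1`). -/
noncomputable def zmodPowHom {G : Type*} [Group G] (r : ℕ) (g : G) :
    Multiplicative (ZMod r) →* G := by
  classical
  exact if h : g ^ (r : ℕ) = 1 then
    AddMonoidHom.toMultiplicativeLeft
      (ZMod.lift r ⟨(zmultiplesHom (Additive G)) (Additive.ofMul g), by
        show ((r : ℕ) : ℤ) • Additive.ofMul g = 0
        rw [← ofMul_zpow, zpow_natCast, h]; rfl⟩)
  else 1

/-- The reduction `M_s ∈ GLₙ(ℤ/s)` of a matrix `M ∈ GLₙ(ℤ)` modulo `s`. -/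
def glReduction (n s : ℕ) (M : GL (Fin n) ℤ) : GL (Fin n) (ZMod s) :=
  Matrix.GeneralLinearGroup.map (Int.castRingHom (ZMod s)) M

/-- The automorphism of `(ℤ/s)ⁿ` (written multiplicatively) given by the matrix
`M_s ∈ GLₙ(ℤ/s)`. -/
def glAut (n s : ℕ) (M : GL (Fin n) ℤ) : MulAut (Multiplicative (Fin n → ZMod s)) :=
  AddEquiv.toMultiplicative
    (((LinearMap.GeneralLinearGroup.generalLinearEquiv (ZMod s) (Fin n → ZMod s))
        (Matrix.GeneralLinearGroup.toLin (glReduction n s M))).toAddEquiv)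

/-- The action of `ℤ/r` on `(ℤ/s)ⁿ` in which the fixed generator `1` of `ℤ/r` acts by the
reduction `M_s` of `M` modulo `s` (assuming the order of `M_s` divides `r`). -/
noncomputable def glTwist (n s r : ℕ) (M : GL (Fin n) ℤ) :
    Multiplicative (ZMod r) →* MulAut (Multiplicative (Fin n → ZMod s)) :=
  zmodPowHom r (glAut n s M)

/-- The semidirect product `(ℤ/s)ⁿ ⋊_{M_s} ℤ/r`. -/
noncomputable def MatSdp (n s r : ℕ) (M : GL (Fin n) ℤ) : Type :=
  Multiplicative (Fin n → ZMod s) ⋊[glTwist n s r M] Multiplicative (ZMod r)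

noncomputable instance (n s r : ℕ) (M : GL (Fin n) ℤ) : Group (MatSdp n s r M) :=
  inferInstanceAs (Group (Multiplicative (Fin n → ZMod s) ⋊[glTwist n s r M]
    Multiplicative (ZMod r)))

/-- The copy of `(ℤ/s)ⁿ` inside `(ℤ/s)ⁿ ⋊_{M_s} ℤ/r`. -/
noncomputable def MatSdp.A (n s r : ℕ) (M : GL (Fin n) ℤ) : Subgroup (MatSdp n s r M) :=
  (SemidirectProduct.inl (φ := glTwist n s r M)).range

/-- The element of `(ℤ/s)ⁿ ⋊_{M_s} ℤ/r` given by `v ∈ (ℤ/s)ⁿ`. -/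
noncomputable def MatSdp.inlV (n s r : ℕ) (M : GL (Fin n) ℤ) (v : Fin n → ZMod s) :
    MatSdp n s r M :=
  SemidirectProduct.inl (ofAdd v)

/-- The canonical projection `pr_{r,s} : (ℤ/s)ⁿ ⋊_{M_s} ℤ/r → ℤ/r`. -/
noncomputable def MatSdp.pr (n s r : ℕ) (M : GL (Fin n) ℤ) :
    MatSdp n s r M →* Multiplicative (ZMod r) :=
  SemidirectProduct.rightHom

/-- The fixed generator `t` of `ℤ/r` inside `(ℤ/s)ⁿ ⋊_{M_s} ℤ/r`. -/
noncomputable def MatSdp.t (n s r : ℕ) (M : GL (Fin n) ℤ) : MatSdp n s r M :=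
  SemidirectProduct.inr (ofAdd (1 : ZMod r))

/-- A (finite) group `H` is *`p`-hyperelementary* for a prime `p` if there is a short exact
sequence `1 → C → H → P → 1` with `C` a normal cyclic subgroup of order prime to `p` and
`P = H/C` a `p`-group (the latter condition being expressed by saying that every element of
`H` has a `p`-power power lying in `C`);  `H` is *hyperelementary* if it is
`p`-hyperelementary for some prime `p`. -/
def IsHyperelementary (H : Type*) [Group H] : Prop :=
  ∃ p : ℕ, p.Prime ∧
    ∃ C : Subgroup H, C.Normal ∧ IsCyclic C ∧ Nat.Coprime (Nat.card C) p ∧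
      ∀ h : H, ∃ m : ℕ, h ^ (p ^ m) ∈ C

/-- `M ∈ GLₙ(ℤ)` is *cyclic-good* if for all positive integers `o` and `ν` there are primes
`p₁ ≠ p₂` with `pᵢ ≡ 1 mod o` and `pᵢ ≥ ν`, such that, setting `s := p₁p₂` and
`r := s·|GLₙ(ℤ/s)|`, every cyclic subgroup `C` of `(ℤ/s)ⁿ ⋊_{M_s} ℤ/r` satisfies
(a) `C ∩ (ℤ/s)ⁿ = {0}`, or (b) there is `i ∈ {1,2}` such that `pᵢ` divides both `|C|` and
`[ℤ/r : pr_{r,s}(C)]`. -/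
noncomputable def CyclicGood (n : ℕ) (M : GL (Fin n) ℤ) : Prop :=
  ∀ o ν : ℕ, 0 < o → 0 < ν →
    ∃ p₁ p₂ : ℕ, p₁.Prime ∧ p₂.Prime ∧ p₁ ≠ p₂ ∧
      p₁ ≡ 1 [MOD o] ∧ p₂ ≡ 1 [MOD o] ∧ ν ≤ p₁ ∧ ν ≤ p₂ ∧
      ∀ C : Subgroup (MatSdp n (p₁ * p₂)
          (p₁ * p₂ * Nat.card (GL (Fin n) (ZMod (p₁ * p₂)))) M),
        IsCyclic C →
          C ⊓ MatSdp.A n (p₁ * p₂) (p₁ * p₂ * Nat.card (GL (Fin n) (ZMod (p₁ * p₂)))) M = ⊥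
          ∨ (p₁ ∣ Nat.card C ∧
              p₁ ∣ (Subgroup.map (MatSdp.pr n (p₁ * p₂)
                (p₁ * p₂ * Nat.card (GL (Fin n) (ZMod (p₁ * p₂)))) M) C).index)
          ∨ (p₂ ∣ Nat.card C ∧
              p₂ ∣ (Subgroup.map (MatSdp.pr n (p₁ * p₂)
                (p₁ * p₂ * Nat.card (GL (Fin n) (ZMod (p₁ * p₂)))) M) C).index)

/-- `M ∈ GLₙ(ℤ)` is *hyper-good* if for all positive integers `o` and `ν` there are natural
numbers `s` and `r` such that `s ≡ 1 mod o`, the order of `GLₙ(ℤ/s)` divides `r`, and every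
hyperelementary subgroup `H` of `(ℤ/s)ⁿ ⋊_{M_s} ℤ/r` satisfies at least one of:
(a) there is a natural number `k` dividing `s` with `k ≡ 1 mod o`, `k ≥ ν` and
`H ∩ (ℤ/s)ⁿ ⊆ k·(ℤ/s)ⁿ`;  (b) `[ℤ/r : pr_{r,s}(H)] ≥ ν`. -/
noncomputable def HyperGood (n : ℕ) (M : GL (Fin n) ℤ) : Prop :=
  ∀ o ν : ℕ, 0 < o → 0 < ν →
    ∃ s r : ℕ, s ≡ 1 [MOD o] ∧ Nat.card (GL (Fin n) (ZMod s)) ∣ r ∧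
      ∀ H : Subgroup (MatSdp n s r M), IsHyperelementary H →
        (∃ k : ℕ, k ∣ s ∧ k ≡ 1 [MOD o] ∧ ν ≤ k ∧
            ∀ v : Fin n → ZMod s, MatSdp.inlV n s r M v ∈ H →
              ∃ w : Fin n → ZMod s, v = k • w)
        ∨ ν ≤ (Subgroup.map (MatSdp.pr n s r M) H).index

/-! Let `w ≠ 1` lie in `C ∩ (ℤ/s)ⁿ`; its order divides `s = p₁p₂`, so some `p = pᵢ` divides
it, and hence `|C|`. Write `C = ⟨g⟩`, let `x = pr g` have order `d` and let `m` be the order of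
the automorphism by which `x` acts, so `m ∣ d` and `m ∣ |GLₙ(ℤ/s)|`. Since `g ^ m` acts
trivially, `g ^ (m * s)` lies in the complement `ℤ/r`. If `p` did not divide the index `r / d`,
then `p * |GLₙ(ℤ/s)| ∣ r` would force `p * m ∣ d`; as `w = g ^ e` with `d ∣ e`, the exponent
`e * q` (`q` the other prime) is a multiple of `m * s` and of `d`, so `w ^ q = 1`, contradicting
`p ∣ orderOf w`. -/

namespace SemidirectProduct

variable {N G : Type*} [Group N] [Group G] {φ : G →* MulAut N}

theorem right_pow (g : N ⋊[φ] G) (k : ℕ) : (g ^ k).right = g.right ^ k :=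
  map_pow rightHom g k

theorem right_zpow (g : N ⋊[φ] G) (k : ℤ) : (g ^ k).right = g.right ^ k :=
  map_zpow rightHom g k

theorem left_pow_of_map_right_eq_one {g : N ⋊[φ] G} (hg : φ g.right = 1) (k : ℕ) :
    (g ^ k).left = g.left ^ k := by
  induction k with
  | zero => rw [pow_zero, pow_zero, one_left]
  | succ k ih => rw [pow_succ, mul_left, ih, right_pow, map_pow, hg, one_pow, pow_succ]; rfl

theorem pow_orderOf_mul_eq_inr {s : ℕ} (hN : ∀ n : N, n ^ s = 1) (g : N ⋊[φ] G) :
    g ^ (orderOf (φ g.right) * s) = inr (g.right ^ (orderOf (φ g.right) * s)) := by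
  have hgm : φ (g ^ orderOf (φ g.right)).right = 1 := by
    rw [right_pow, map_pow, pow_orderOf_eq_one]
  ext
  · rw [pow_mul, left_pow_of_map_right_eq_one hgm, hN, left_inr]
  · rw [right_pow, right_inr]

theorem zpow_eq_one_of_orderOf_mul_dvd {s : ℕ} (hN : ∀ n : N, n ^ s = 1) {g : N ⋊[φ] G}
    {k : ℤ} (hk : ((orderOf (φ g.right) * s : ℕ) : ℤ) ∣ k) (hgk : g.right ^ k = 1) :
    g ^ k = 1 := by
  obtain ⟨t, rfl⟩ := hk
  rw [zpow_mul, zpow_natCast, pow_orderOf_mul_eq_inr hN, ← map_zpow, ← zpow_natCast,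
    ← zpow_mul, hgk, map_one]

open Subgroup in
theorem dvd_index_map_zpowers [Finite G] {p q s c : ℕ} (hp : p.Prime) (hpq : ¬p ∣ q)
    (hN : ∀ n : N, n ^ s = 1) (hs : s ∣ p * q) (hφ : ∀ x : G, φ x ^ c = 1)
    (hc : p * c ∣ Nat.card G) {g w : N ⋊[φ] G} (hw : w ∈ zpowers g) (hwr : w.right = 1)
    (hpw : p ∣ orderOf w) : p ∣ ((zpowers g).map rightHom).index := by
  set x := g.right
  set m := orderOf (φ x)
  have hcard : orderOf x * ((zpowers g).map rightHom).index = Nat.card G := by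
    rw [← Nat.card_zpowers, MonoidHom.map_zpowers]
    exact card_mul_index _
  by_contra hpi
  obtain ⟨t, ht⟩ : m ∣ orderOf x :=
    orderOf_dvd_of_pow_eq_one (by rw [← map_pow, pow_orderOf_eq_one, map_one])
  have hm : 0 < m := Nat.pos_of_ne_zero fun h => (orderOf_pos x).ne' (by simpa [h] using ht)
  have hpt : p ∣ t := by
    refine (hp.dvd_mul.mp (Nat.dvd_of_mul_dvd_mul_left hm ?_)).resolve_right hpi
    rw [← mul_assoc, ← ht, hcard, mul_comm]
    exact (mul_dvd_mul_left p (orderOf_dvd_of_pow_eq_one (hφ x))).trans hc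
  obtain ⟨z, rfl⟩ := mem_zpowers_iff.mp hw
  have hdz : (orderOf x : ℤ) ∣ z := orderOf_dvd_iff_zpow_eq_one.mpr (by rwa [← right_zpow])
  have hwq : (g ^ z) ^ q = 1 := by
    rw [← zpow_natCast, ← zpow_mul]
    refine zpow_eq_one_of_orderOf_mul_dvd hN ?_ ?_
    · have hmpz : ((m * p : ℕ) : ℤ) ∣ z :=
        (Int.natCast_dvd_natCast.mpr (ht ▸ mul_dvd_mul_left m hpt)).trans hdz
      calc ((m * s : ℕ) : ℤ) ∣ ((m * p : ℕ) : ℤ) * q := by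
            exact_mod_cast mul_assoc m p q ▸ mul_dvd_mul_left m hs
        _ ∣ z * q := mul_dvd_mul_right hmpz _
    · rw [zpow_mul, orderOf_dvd_iff_zpow_eq_one.mp hdz, one_zpow]
  exact hpq (hpw.trans (orderOf_dvd_of_pow_eq_one hwq))

end SemidirectProduct

theorem dvd_orderOf_or_dvd_orderOf {G : Type*} [Group G] {p q : ℕ} (hp : p.Prime)
    (hq : q.Prime) {w : G} (hw : w ^ (p * q) = 1) (hw1 : w ≠ 1) :
    p ∣ orderOf w ∨ q ∣ orderOf w := by
  obtain ⟨ℓ, hℓ, hℓw⟩ := Nat.exists_prime_and_dvd (mt orderOf_eq_one_iff.mp hw1)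
  rcases (Nat.Prime.dvd_mul hℓ).mp (hℓw.trans (orderOf_dvd_of_pow_eq_one hw)) with h | h
  · exact .inl ((Nat.prime_dvd_prime_iff_eq hℓ hp).mp h ▸ hℓw)
  · exact .inr ((Nat.prime_dvd_prime_iff_eq hℓ hq).mp h ▸ hℓw)

theorem zmodPowHom_pow_eq_one {G : Type*} [Group G] {r c : ℕ} {g : G} (hg : g ^ c = 1)
    (x : Multiplicative (ZMod r)) : zmodPowHom r g x ^ c = 1 := by
  unfold zmodPowHom
  split_ifs
  · rw [← ofAdd_toAdd x, ← ZMod.intCast_zmod_cast (toAdd x)]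
    simp only [AddMonoidHom.toMultiplicativeLeft_apply_apply, toAdd_ofAdd, ZMod.lift_coe,
      zmultiplesHom_apply, toMul_zsmul, toMul_ofMul]
    rw [← zpow_natCast, ← zpow_mul, mul_comm, zpow_mul, zpow_natCast, hg, one_zpow]
  · exact one_pow c

theorem multiplicative_zmod_pow_eq_one {ι : Type*} (s : ℕ) (u : Multiplicative (ι → ZMod s)) :
    u ^ s = 1 := by
  rw [← ofAdd_toAdd u, ← ofAdd_nsmul, ofAdd_eq_one]
  ext i
  simp

def glAutHom (n : ℕ) (R : Type*) [CommRing R] :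
    GL (Fin n) R →* MulAut (Multiplicative (Fin n → R)) where
  toFun A := AddEquiv.toMultiplicative
    (((LinearMap.GeneralLinearGroup.generalLinearEquiv R (Fin n → R))
        (Matrix.GeneralLinearGroup.toLin A)).toAddEquiv)
  map_one' := by ext; simp
  map_mul' A B := by ext; simp

theorem glAut_pow_card (n s : ℕ) [NeZero s] (M : GL (Fin n) ℤ) :
    glAut n s M ^ Nat.card (GL (Fin n) (ZMod s)) = 1 := by
  rw [show glAut n s M = glAutHom n (ZMod s) (glReduction n s M) from rfl, ← map_pow,
    pow_card_eq_one', map_one]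

namespace MatSdp

variable {n s r : ℕ} {M : GL (Fin n) ℤ}

theorem pow_eq_one_of_mem_A {w : MatSdp n s r M} (hw : w ∈ A n s r M) : w ^ s = 1 := by
  obtain ⟨u, rfl⟩ := hw
  exact (map_pow _ u s).symm.trans
    ((congrArg _ (multiplicative_zmod_pow_eq_one s u)).trans (map_one _))

theorem dvd_card_and_dvd_index_map_pr [NeZero s] [NeZero r] {p q : ℕ} (hp : p.Prime)
    (hpq : ¬p ∣ q) (hs : s ∣ p * q) (hr : p * Nat.card (GL (Fin n) (ZMod s)) ∣ r)
    {C : Subgroup (MatSdp n s r M)} (hC : IsCyclic C) {w : MatSdp n s r M} (hwC : w ∈ C)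
    (hwA : w ∈ A n s r M) (hpw : p ∣ orderOf w) :
    p ∣ Nat.card C ∧ p ∣ (C.map (pr n s r M)).index := by
  refine ⟨hpw.trans (C.orderOf_dvd_natCard hwC), ?_⟩
  obtain ⟨g, rfl⟩ := C.isCyclic_iff_exists_zpowers_eq_top.mp hC
  obtain ⟨u, rfl⟩ := hwA
  exact SemidirectProduct.dvd_index_map_zpowers hp hpq (multiplicative_zmod_pow_eq_one s) hs
    (zmodPowHom_pow_eq_one (glAut_pow_card n s M))
    (by rwa [Nat.card_congr toAdd, Nat.card_zmod]) hwC (SemidirectProduct.right_inl u) hpw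

end MatSdp

/-- Every `M ∈ GLₙ(ℤ)` is cyclic-good. -/
theorem all_glZ_cyclicGood (n : ℕ) (M : GL (Fin n) ℤ) : CyclicGood n M := by
  intro o ν ho _
  obtain ⟨p₁, hp₁, hν₁, ho₁⟩ := Nat.exists_prime_gt_modEq_one ν ho.ne'
  obtain ⟨p₂, hp₂, hν₂, ho₂⟩ := Nat.exists_prime_gt_modEq_one (max ν p₁) ho.ne'
  have hp₁₂ : p₁ ≠ p₂ := ((le_max_right _ _).trans_lt hν₂).ne
  refine ⟨p₁, p₂, hp₁, hp₂, hp₁₂, ho₁, ho₂, hν₁.le, (le_max_left _ _).trans hν₂.le,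
    fun C hC => ?_⟩
  have : NeZero (p₁ * p₂) := ⟨mul_ne_zero hp₁.ne_zero hp₂.ne_zero⟩
  have : NeZero (p₁ * p₂ * Nat.card (GL (Fin n) (ZMod (p₁ * p₂)))) :=
    ⟨mul_ne_zero (NeZero.ne _) Nat.card_pos.ne'⟩
  refine (Subgroup.bot_or_exists_ne_one _).imp id fun ⟨w, hw, hw1⟩ => ?_
  obtain ⟨hwC, hwA⟩ := Subgroup.mem_inf.mp hw
  rcases dvd_orderOf_or_dvd_orderOf hp₁ hp₂ (MatSdp.pow_eq_one_of_mem_A hwA) hw1 with h | h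
  · exact .inl (MatSdp.dvd_card_and_dvd_index_map_pr hp₁
      ((Nat.prime_dvd_prime_iff_eq hp₁ hp₂).not.mpr hp₁₂) dvd_rfl ⟨p₂, by ring⟩ hC hwC hwA h)
  · exact .inr (MatSdp.dvd_card_and_dvd_index_map_pr hp₂
      ((Nat.prime_dvd_prime_iff_eq hp₂ hp₁).not.mpr hp₁₂.symm) (mul_comm p₁ p₂).dvd
      ⟨p₁, by ring⟩ hC hwC hwA h)
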